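/- arXiv:0912.3091 — 9 statements merged into one kernel-verified Lean document; each statement's English description precedes it below -/
import Mathlib

section
/- Let λ > 0 and let V : ℝ → ℝ be a measurable, even, nonnegative function with V(s) ≤ α + β s² for some α, β > 0 (so that all integrals below converge). Then λ² ∫_{-∞}^0 ∫_{-∞}^0 e^{λ s} e^{λ u} (V(s) + V(u) - V(s-u)) ds du = λ ∫_0^∞ e^{-λ s} V(s) ds. -/
/-!
Write `e(s) = exp (c s) 𝟙[s ≤ 0]`. The terms `V s` and `V u` of the integrand separate into
products of one-dimensional integrals. For the term `V (s - u)`, the shear `w = s - u` preserves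
Lebesgue measure on `ℝ²`, and Fubini turns it into `∫ V w (∫ e u e (u + w) du) dw`; the inner
autocorrelation is `exp (-c |w|) / (2c)`. With `c = λ`, evenness of `V` identifies both
`∫_{s ≤ 0} exp (λ s) V s` and `½ ∫ exp (-λ |w|) V w` with `∫_{s > 0} exp (-λ s) V s`.
-/

open MeasureTheory Real Set

theorem integrable_of_even_of_integrableOn_Ioi {E : Type*} [NormedAddCommGroup E] {f : ℝ → E}
    (heven : ∀ x, f (-x) = f x) (hf : IntegrableOn f (Ioi 0)) : Integrable f := by
  rw [← integrableOn_univ, ← Iic_union_Ioi (a := (0 : ℝ)), integrableOn_union]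
  refine ⟨?_, hf⟩
  have hIci : IntegrableOn f (Ici (-0)) := by
    rw [neg_zero]
    exact (integrableOn_Ici_iff_integrableOn_Ioi).mpr hf
  simpa [heven] using hIci.comp_neg_Iic

theorem integrableOn_Ioi_add_mul_sq_mul_exp_neg_mul {c : ℝ} (hc : 0 < c) (α β : ℝ) :
    IntegrableOn (fun x => (α + β * x ^ 2) * exp (-c * x)) (Ioi 0) := by
  have h0 := integrableOn_rpow_mul_exp_neg_mul_rpow (s := 0) (by norm_num) one_pos hc
  have h2 := integrableOn_rpow_mul_exp_neg_mul_rpow (s := 2) (by norm_num) one_pos hc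
  simp only [rpow_zero, rpow_one, rpow_two, one_mul] at h0 h2
  have hsum : IntegrableOn (fun x => α * exp (-c * x) + β * (x ^ 2 * exp (-c * x))) (Ioi 0) :=
    (h0.const_mul α).add (h2.const_mul β)
  exact hsum.congr_fun (fun x _ => by ring) measurableSet_Ioi

theorem integrable_exp_neg_mul_abs_mul_of_abs_le {c : ℝ} (hc : 0 < c) {f : ℝ → ℝ}
    (hf : AEStronglyMeasurable f) {α β : ℝ} (hbound : ∀ x, |f x| ≤ α + β * x ^ 2) :
    Integrable fun x => exp (-c * |x|) * f x := by
  have hdom : Integrable fun x => (α + β * x ^ 2) * exp (-c * |x|) := by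
    refine integrable_of_even_of_integrableOn_Ioi (fun x => by simp) ?_
    refine (integrableOn_Ioi_add_mul_sq_mul_exp_neg_mul hc α β).congr_fun
      (fun x hx => ?_) measurableSet_Ioi
    rw [abs_of_pos hx]
  refine hdom.mono' (by fun_prop) (Filter.Eventually.of_forall fun x => ?_)
  rw [norm_mul, norm_of_nonneg (exp_pos _).le, mul_comm, Real.norm_eq_abs]
  exact mul_le_mul_of_nonneg_right (hbound x) (exp_pos _).le

noncomputable def truncExp (c : ℝ) : ℝ → ℝ := (Iic 0).indicator fun s => exp (c * s)

theorem measurable_truncExp (c : ℝ) : Measurable (truncExp c) :=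
  (by fun_prop : Measurable fun s => exp (c * s)).indicator measurableSet_Iic

theorem truncExp_nonneg (c s : ℝ) : 0 ≤ truncExp c s :=
  indicator_nonneg (fun _ _ => (exp_pos _).le) s

theorem truncExp_mul_truncExp_add (c w u : ℝ) :
    truncExp c u * truncExp c (u + w) =
      (Iic (min 0 (-w))).indicator (fun u => exp (c * w) * exp (2 * c * u)) u := by
  simp only [truncExp, indicator_apply, mem_Iic, le_min_iff]
  by_cases hu : u ≤ 0 <;> by_cases huw : u + w ≤ 0
  · rw [if_pos hu, if_pos huw, if_pos ⟨hu, by linarith⟩, ← exp_add, ← exp_add]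
    ring_nf
  all_goals simp [hu, huw] <;> linarith

theorem integrable_truncExp_mul_truncExp_add {c : ℝ} (hc : 0 < c) (w : ℝ) :
    Integrable fun u => truncExp c u * truncExp c (u + w) := by
  simp_rw [truncExp_mul_truncExp_add]
  rw [integrable_indicator_iff measurableSet_Iic]
  exact (integrableOn_exp_mul_Iic (by positivity) _).const_mul _

theorem integral_truncExp_mul_truncExp_add {c : ℝ} (hc : 0 < c) (w : ℝ) :
    ∫ u, truncExp c u * truncExp c (u + w) = exp (-c * |w|) / (2 * c) := by
  simp_rw [truncExp_mul_truncExp_add]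
  rw [integral_indicator measurableSet_Iic, integral_const_mul,
    integral_exp_mul_Iic (by positivity), mul_div_assoc', ← exp_add]
  congr 2
  rcases le_total 0 w with hw | hw
  · rw [min_eq_right (by linarith), abs_of_nonneg hw]
    ring
  · rw [min_eq_left (by linarith), abs_of_nonpos hw]
    ring

/-- The integrand `exp (c s) exp (c u) V (s - u)` on `Iic 0 ×ˢ Iic 0`, in the coordinates
`(w, u) = (s - u, u)`. -/
noncomputable def shearedIntegrand (c : ℝ) (V : ℝ → ℝ) (z : ℝ × ℝ) : ℝ :=
  V z.1 * (truncExp c z.2 * truncExp c (z.2 + z.1))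

section Shear

variable {c : ℝ} {V : ℝ → ℝ}

theorem measurable_shearedIntegrand (hV : Measurable V) : Measurable (shearedIntegrand c V) := by
  have := measurable_truncExp c
  unfold shearedIntegrand
  fun_prop

theorem integrable_shearedIntegrand (hc : 0 < c) (hV : Measurable V)
    (hint : Integrable fun w => exp (-c * |w|) * V w) :
    Integrable (shearedIntegrand c V) (volume.prod volume) := by
  rw [integrable_prod_iff (measurable_shearedIntegrand hV).aestronglyMeasurable]
  refine ⟨Filter.Eventually.of_forall fun w =>
    (integrable_truncExp_mul_truncExp_add hc w).const_mul (V w), ?_⟩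
  simp_rw [shearedIntegrand, norm_mul, norm_of_nonneg (truncExp_nonneg _ _), integral_const_mul,
    integral_truncExp_mul_truncExp_add hc]
  refine (hint.norm.div_const (2 * c)).congr (Filter.Eventually.of_forall fun w => ?_)
  simp only [norm_mul, norm_of_nonneg (exp_pos _).le]
  ring

theorem integral_shearedIntegrand (hc : 0 < c) (hV : Measurable V)
    (hint : Integrable fun w => exp (-c * |w|) * V w) :
    ∫ z, shearedIntegrand c V z ∂(volume.prod volume) = (∫ w, exp (-c * |w|) * V w) / (2 * c) := by
  rw [integral_prod _ (integrable_shearedIntegrand hc hV hint), ← integral_div]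
  simp_rw [shearedIntegrand, integral_const_mul, integral_truncExp_mul_truncExp_add hc]
  congr 1 with w
  ring

theorem indicator_Iic_prod_Iic_eq_shearedIntegrand_comp :
    (Iic 0 ×ˢ Iic 0).indicator (fun z : ℝ × ℝ => exp (c * z.1) * exp (c * z.2) * V (z.1 - z.2)) =
      shearedIntegrand c V ∘ fun z => (z.1 - z.2, z.2) := by
  ext ⟨s, u⟩
  simp only [shearedIntegrand, truncExp, indicator_apply, mem_prod, mem_Iic, Function.comp_apply,
    add_sub_cancel]
  by_cases hs : s ≤ 0 <;> by_cases hu : u ≤ 0 <;> simp [hs, hu]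
  ring

theorem integrableOn_Iic_prod_Iic_exp_mul_exp_mul_comp_sub (hc : 0 < c) (hV : Measurable V)
    (hint : Integrable fun w => exp (-c * |w|) * V w) :
    IntegrableOn (fun z : ℝ × ℝ => exp (c * z.1) * exp (c * z.2) * V (z.1 - z.2))
      (Iic 0 ×ˢ Iic 0) := by
  rw [← integrable_indicator_iff (measurableSet_Iic.prod measurableSet_Iic),
    indicator_Iic_prod_Iic_eq_shearedIntegrand_comp, Measure.volume_eq_prod,
    (measurePreserving_sub_prod volume volume).integrable_comp
      (measurable_shearedIntegrand hV).aestronglyMeasurable]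
  exact integrable_shearedIntegrand hc hV hint

theorem setIntegral_Iic_prod_Iic_exp_mul_exp_mul_comp_sub (hc : 0 < c) (hV : Measurable V)
    (hint : Integrable fun w => exp (-c * |w|) * V w) :
    ∫ z in Iic 0 ×ˢ Iic 0, exp (c * z.1) * exp (c * z.2) * V (z.1 - z.2) =
      (∫ w, exp (-c * |w|) * V w) / (2 * c) := by
  have hshear := measurePreserving_sub_prod (volume : Measure ℝ) volume
  have hmeas := (measurable_shearedIntegrand (c := c) hV).aestronglyMeasurable
    (μ := volume.prod volume)
  rw [← integral_indicator (measurableSet_Iic.prod measurableSet_Iic),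
    indicator_Iic_prod_Iic_eq_shearedIntegrand_comp, Measure.volume_eq_prod,
    ← integral_shearedIntegrand hc hV hint]
  rw [← hshear.map_eq] at hmeas
  conv_rhs => rw [← hshear.map_eq]
  exact (integral_map hshear.measurable.aemeasurable hmeas).symm

theorem integral_Iic_integral_Iic_exp_mul_exp_mul (hc : 0 < c) (hV : Measurable V)
    (hint : Integrable fun w => exp (-c * |w|) * V w) :
    ∫ s in Iic 0, ∫ u in Iic 0, exp (c * s) * exp (c * u) * (V s + V u - V (s - u)) =
      2 / c * (∫ s in Iic 0, exp (c * s) * V s) - (∫ w, exp (-c * |w|) * V w) / (2 * c) := by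
  have hexpV : IntegrableOn (fun s => exp (c * s) * V s) (Iic 0) := by
    refine hint.integrableOn.congr_fun (fun s hs => ?_) measurableSet_Iic
    dsimp only
    rw [abs_of_nonpos (mem_Iic.mp hs), mul_neg, neg_mul, neg_neg]
  have hexp : IntegrableOn (fun s => exp (c * s)) (Iic 0) := integrableOn_exp_mul_Iic hc 0
  have hprod {f g : ℝ → ℝ} (hf : IntegrableOn f (Iic 0)) (hg : IntegrableOn g (Iic 0)) :
      IntegrableOn (fun z : ℝ × ℝ => f z.1 * g z.2) (Iic 0 ×ˢ Iic 0) := by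
    rw [IntegrableOn, Measure.volume_eq_prod, ← Measure.prod_restrict]
    exact hf.mul_prod hg
  have h₁₂ : IntegrableOn (fun z : ℝ × ℝ =>
      exp (c * z.1) * V z.1 * exp (c * z.2) + exp (c * z.1) * (exp (c * z.2) * V z.2))
      (Iic 0 ×ˢ Iic 0) := (hprod hexpV hexp).add (hprod hexp hexpV)
  have h₃ := integrableOn_Iic_prod_Iic_exp_mul_exp_mul_comp_sub hc hV hint
  have hsplit : ∀ z : ℝ × ℝ, exp (c * z.1) * exp (c * z.2) * (V z.1 + V z.2 - V (z.1 - z.2)) =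
      exp (c * z.1) * V z.1 * exp (c * z.2) + exp (c * z.1) * (exp (c * z.2) * V z.2) -
        exp (c * z.1) * exp (c * z.2) * V (z.1 - z.2) := fun z => by ring
  rw [← setIntegral_prod _ ((h₁₂.sub h₃).congr_fun (fun z _ => (hsplit z).symm)
      (measurableSet_Iic.prod measurableSet_Iic))]
  simp_rw [hsplit]
  rw [← Measure.volume_eq_prod, integral_sub h₁₂ h₃, integral_add (hprod hexpV hexp)
      (hprod hexp hexpV), Measure.volume_eq_prod,
    setIntegral_prod_mul (fun s => exp (c * s) * V s) (fun u => exp (c * u)),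
    setIntegral_prod_mul (fun s => exp (c * s)) (fun u => exp (c * u) * V u),
    ← Measure.volume_eq_prod, setIntegral_Iic_prod_Iic_exp_mul_exp_mul_comp_sub hc hV hint,
    integral_exp_mul_Iic hc]
  simp only [mul_zero, exp_zero]
  ring

end Shear

theorem stmt_3_general (lam : ℝ) (hlam : 0 < lam) (V : ℝ → ℝ)
    (hmeas : Measurable V) (heven : ∀ s, V (-s) = V s) (hpos : ∀ s, 0 ≤ V s)
    (α β : ℝ) (hbound : ∀ s, V s ≤ α + β * s ^ 2) :
    lam ^ 2 * ∫ s in Set.Iic (0:ℝ), ∫ u in Set.Iic (0:ℝ),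
        Real.exp (lam * s) * Real.exp (lam * u) * (V s + V u - V (s - u))
      = lam * ∫ s in Set.Ioi (0:ℝ), Real.exp (-lam * s) * V s := by
  have hint : Integrable fun w => exp (-lam * |w|) * V w :=
    integrable_exp_neg_mul_abs_mul_of_abs_le hlam hmeas.aestronglyMeasurable
      fun s => (abs_of_nonneg (hpos s)).trans_le (hbound s)
  have hreflect : ∫ s in Iic 0, exp (lam * s) * V s = ∫ s in Ioi 0, exp (-lam * s) * V s := by
    simpa [heven] using integral_comp_neg_Iic 0 fun s => exp (-lam * s) * V s
  have hsymm : ∫ w, exp (-lam * |w|) * V w = 2 * ∫ s in Ioi 0, exp (-lam * s) * V s := by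
    rw [← integral_comp_abs (f := fun s => exp (-lam * s) * V s)]
    congr 1 with w
    rcases abs_choice w with h | h <;> rw [h]
    rw [heven]
  rw [integral_Iic_integral_Iic_exp_mul_exp_mul hlam hmeas hint, hreflect, hsymm]
  field_simp
  ring

theorem stmt_3 (lam : ℝ) (hlam : 0 < lam) (V : ℝ → ℝ)
    (hmeas : Measurable V) (heven : ∀ s, V (-s) = V s) (hpos : ∀ s, 0 ≤ V s)
    (α β : ℝ) (hα : 0 < α) (hβ : 0 < β) (hbound : ∀ s, V s ≤ α + β * s ^ 2) :
    lam ^ 2 * ∫ s in Set.Iic (0:ℝ), ∫ u in Set.Iic (0:ℝ),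
        Real.exp (lam * s) * Real.exp (lam * u) * (V s + V u - V (s - u))
      = lam * ∫ s in Set.Ioi (0:ℝ), Real.exp (-lam * s) * V s :=
  stmt_3_general lam hlam V hmeas heven hpos α β hbound
end

section
/- Let λ > 0 and let f : ℝ → ℝ be locally integrable, vanishing on (-∞, 0), with f(t) → 0 as t → ∞. Define ψ_f(t) = f(t) - λ e^{-λ t} ∫_{-∞}^t e^{λ s} f(s) ds. Then ∫_0^t ψ_f(s) ds → 0 as t → ∞. -/
/-!
With `G t = ∫₀ᵗ e^{λu} f u du`, the function `t ↦ e^{-λt} G t` is absolutely continuous and,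
by Lebesgue differentiation, has derivative `f t - λ e^{-λt} G t = ψ_f t` almost everywhere;
since `f` vanishes on `(-∞, 0)`, this gives `∫₀ᵗ ψ_f = e^{-λt} G t`. Splitting `G t` at a time
after which `|f| ≤ ε` shows `e^{-λt} G t → 0`: the early part is killed by `e^{-λt}`, the tail
is at most `ε / λ`.
-/

open MeasureTheory Real Set Filter

theorem AbsolutelyContinuousOnInterval.integral_eq_sub_of_ae_hasDerivAt {F F' : ℝ → ℝ} {a b : ℝ}
    (hF : AbsolutelyContinuousOnInterval F a b)
    (hderiv : ∀ᵐ x, x ∈ uIcc a b → HasDerivAt F (F' x) x) :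
    ∫ x in a..b, F' x = F b - F a := by
  rw [← hF.integral_deriv_eq_sub]
  refine intervalIntegral.integral_congr_ae ?_
  filter_upwards [hderiv] with x hx hxI using (hx (uIoc_subset_uIcc hxI)).deriv.symm

theorem MeasureTheory.LocallyIntegrable.exp_mul_mul {f : ℝ → ℝ} (hf : LocallyIntegrable f volume)
    (lam : ℝ) :
    LocallyIntegrable (fun u => exp (lam * u) * f u) volume :=
  locallyIntegrableOn_univ.mp <| (locallyIntegrableOn_univ.mpr hf).continuousOn_mul
    (by fun_prop) isClosed_univ.isLocallyClosed

theorem integral_sub_mul_exp_mul_integral {f : ℝ → ℝ} (hf : LocallyIntegrable f volume)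
    (lam a b : ℝ) :
    ∫ s in a..b, (f s - lam * exp (-lam * s) * ∫ u in a..s, exp (lam * u) * f u) =
      exp (-lam * b) * ∫ u in a..b, exp (lam * u) * f u := by
  have hg := hf.exp_mul_mul lam
  have hprimitive :=
    (hg.integrableOn_isCompact (isCompact_uIcc (a := a) (b := b))).intervalIntegrable
      |>.absolutelyContinuousOnInterval_intervalIntegral left_mem_uIcc
  have hAC : AbsolutelyContinuousOnInterval
      (fun t => exp (-lam * t) * ∫ u in a..t, exp (lam * u) * f u) a b :=
    (ContDiffOn.absolutelyContinuousOnInterval (by fun_prop)).mul hprimitive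
  rw [hAC.integral_eq_sub_of_ae_hasDerivAt, intervalIntegral.integral_same, mul_zero, sub_zero]
  filter_upwards [LocallyIntegrable.ae_hasDerivAt_integral hg] with x hx _
  have hexp : HasDerivAt (fun t => exp (-lam * t)) (-lam * exp (-lam * x)) x := by
    simpa [mul_comm] using ((hasDerivAt_id x).const_mul (-lam)).exp
  refine (hexp.mul (hx a)).congr_deriv ?_
  rw [← mul_assoc, ← exp_add, show -lam * x + lam * x = 0 by ring, exp_zero]
  ring

theorem abs_exp_neg_mul_integral_exp_mul_mul_le {f : ℝ → ℝ} {lam T t M : ℝ} (hlam : 0 < lam)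
    (hTt : T ≤ t) (hM₀ : 0 ≤ M) (hM : ∀ u ∈ Ioc T t, |f u| ≤ M) :
    |exp (-lam * t) * ∫ u in T..t, exp (lam * u) * f u| ≤ M / lam := by
  have hbound : ‖∫ u in T..t, exp (lam * u) * f u‖ ≤ ∫ u in T..t, M * exp (lam * u) := by
    have hcont : Continuous fun u => M * exp (lam * u) := by fun_prop
    refine intervalIntegral.norm_integral_le_of_norm_le hTt (Eventually.of_forall fun u hu => ?_)
      (hcont.intervalIntegrable T t)
    rw [norm_mul, norm_of_nonneg (exp_pos _).le, mul_comm, Real.norm_eq_abs]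
    exact mul_le_mul_of_nonneg_right (hM u hu) (exp_pos _).le
  have hexp : ∫ u in T..t, M * exp (lam * u) = M / lam * (exp (lam * t) - exp (lam * T)) := by
    rw [intervalIntegral.integral_const_mul, intervalIntegral.integral_comp_mul_left exp hlam.ne',
      integral_exp, smul_eq_mul]
    field_simp
  calc |exp (-lam * t) * ∫ u in T..t, exp (lam * u) * f u|
      = exp (-lam * t) * |∫ u in T..t, exp (lam * u) * f u| := by
        rw [abs_mul, abs_of_pos (exp_pos _)]
    _ ≤ exp (-lam * t) * (M / lam * (exp (lam * t) - exp (lam * T))) := by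
        rw [← hexp, ← Real.norm_eq_abs]; gcongr
    _ ≤ exp (-lam * t) * (M / lam * exp (lam * t)) := by
        gcongr; linarith [exp_pos (lam * T)]
    _ = M / lam := by
        rw [mul_left_comm, ← exp_add, neg_mul, neg_add_cancel, exp_zero, mul_one]

theorem tendsto_exp_neg_mul_integral_exp_mul_mul {f : ℝ → ℝ} {lam : ℝ} (hlam : 0 < lam)
    (hf : LocallyIntegrable f volume) (hlim : Tendsto f atTop (nhds 0)) (a : ℝ) :
    Tendsto (fun t => exp (-lam * t) * ∫ u in a..t, exp (lam * u) * f u) atTop (nhds 0) := by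
  have hg := hf.exp_mul_mul lam
  rw [Metric.tendsto_nhds]
  intro ε hε
  obtain ⟨T, hT⟩ : ∃ T, ∀ u ≥ T, |f u| ≤ lam * ε / 3 :=
    eventually_atTop.mp <| (Metric.tendsto_nhds.mp hlim (lam * ε / 3) (by positivity)).mono
      fun u hu => by simpa [Real.dist_eq] using hu.le
  have hdecay : Tendsto (fun t => exp (-lam * t) * ∫ u in a..T, exp (lam * u) * f u) atTop
      (nhds 0) := by
    simpa using (tendsto_exp_atBot.comp
      (tendsto_id.const_mul_atTop_of_neg (neg_neg_of_pos hlam))).mul_const _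
  filter_upwards [Metric.tendsto_nhds.mp hdecay (ε / 3) (by positivity),
    eventually_ge_atTop T] with t hsmall htT
  rw [← intervalIntegral.integral_add_adjacent_intervals
    ((hg.integrableOn_isCompact isCompact_uIcc).intervalIntegrable)
    ((hg.integrableOn_isCompact isCompact_uIcc).intervalIntegrable), mul_add, Real.dist_eq,
    sub_zero]
  have htail := abs_exp_neg_mul_integral_exp_mul_mul_le hlam htT (by positivity)
    fun u hu => hT u hu.1.le
  rw [Real.dist_eq, sub_zero] at hsmall
  calc _ ≤ _ := abs_add_le _ _
    _ < ε / 3 + lam * ε / 3 / lam := add_lt_add_of_lt_of_le hsmall htail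
    _ < ε := by field_simp; linarith

theorem setIntegral_Iic_eq_intervalIntegral_of_eq_zero {g : ℝ → ℝ} {a t : ℝ}
    (hg : ∀ s < a, g s = 0) (hat : a ≤ t) :
    ∫ s in Iic t, g s = ∫ s in a..t, g s := by
  rw [intervalIntegral.integral_of_le hat, ← integral_Icc_eq_integral_Ioc]
  refine setIntegral_eq_of_subset_of_forall_sdiff_eq_zero measurableSet_Iic Icc_subset_Iic_self
    fun s hs => hg s <| lt_of_not_ge fun has => hs.2 ⟨has, hs.1⟩

theorem stmt_5 (lam : ℝ) (hlam : 0 < lam) (f ψ : ℝ → ℝ)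
    (hf : LocallyIntegrable f volume)
    (hzero : ∀ t < (0:ℝ), f t = 0)
    (hlim : Tendsto f atTop (nhds 0))
    (hψ : ∀ t : ℝ, ψ t = f t - lam * Real.exp (-lam * t) * ∫ s in Set.Iic t, Real.exp (lam * s) * f s) :
    Tendsto (fun t => ∫ s in (0:ℝ)..t, ψ s) atTop (nhds 0) := by
  have hψ₀ : ∀ s ≥ 0,
      ψ s = f s - lam * exp (-lam * s) * ∫ u in (0:ℝ)..s, exp (lam * u) * f u := fun s hs => by
    rw [hψ, setIntegral_Iic_eq_intervalIntegral_of_eq_zero (fun u hu => by simp [hzero u hu]) hs]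
  refine (tendsto_exp_neg_mul_integral_exp_mul_mul hlam hf hlim 0).congr' ?_
  filter_upwards [eventually_ge_atTop 0] with t ht
  rw [← integral_sub_mul_exp_mul_integral hf]
  refine intervalIntegral.integral_congr fun s hs => (hψ₀ s ?_).symm
  exact (uIcc_of_le ht ▸ hs).1
end

section
/- Let ψ : (0,∞) → ℝ be measurable, c ≠ 0, α ∈ (-1, -1/2). Assume ψ(t)/t^α → c as t → ∞ and |ψ(t)| ≤ c₁ t^α for all t > 0 and some c₁ > 0. Define r(t) = ∫_0^∞ ψ(t+s) ψ(s) ds. Then r(t) / t^{2α+1} → c² · Γ(1+α)Γ(-1-2α)/Γ(-α) as t → ∞. -/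
/-!
Substituting `s = t u` and writing `ψ x = x ^ α * g x` turns `r t / t ^ (2α+1)` into
`∫₀^∞ g (t (1+u)) g (t u) u ^ α (1+u) ^ α du`. Here `g` is bounded and tends to `c`, while
`u ^ α (1+u) ^ α` is integrable because `-1 < α < -1/2`, so dominated convergence gives the limit
`c² ∫₀^∞ u ^ α (1+u) ^ α du`, a Beta integral `B(1+α, -1-2α)` after `u = x / (1-x)`.
-/

open MeasureTheory Real Set Filter Topology

theorem Real.integral_rpow_mul_one_sub_rpow {a b : ℝ} (ha : 0 < a) (hb : 0 < b) :
    ∫ x in (0:ℝ)..1, x ^ (a - 1) * (1 - x) ^ (b - 1) = Gamma a * Gamma b / Gamma (a + b) := by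
  have hβ := Complex.betaIntegral_eq_Gamma_mul_div a b (by simpa using ha) (by simpa using hb)
  rw [Complex.betaIntegral] at hβ
  have hcast : ∫ x in (0:ℝ)..1, (x : ℂ) ^ ((a : ℂ) - 1) * (1 - (x : ℂ)) ^ ((b : ℂ) - 1)
      = ((∫ x in (0:ℝ)..1, x ^ (a - 1) * (1 - x) ^ (b - 1) : ℝ) : ℂ) := by
    rw [← intervalIntegral.integral_ofReal]
    refine intervalIntegral.integral_congr fun x hx => ?_
    rw [uIcc_of_le zero_le_one] at hx
    push_cast
    rw [Complex.ofReal_cpow hx.1, Complex.ofReal_cpow (sub_nonneg.2 hx.2)]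
    push_cast
    ring
  rw [hcast, ← Complex.ofReal_add, Complex.Gamma_ofReal, Complex.Gamma_ofReal,
    Complex.Gamma_ofReal] at hβ
  exact_mod_cast hβ

theorem Real.integral_Ioi_rpow_mul_one_add_rpow {a b : ℝ} (ha : 0 < a) (hb : 0 < b) :
    ∫ u in Ioi (0:ℝ), u ^ (a - 1) * (1 + u) ^ (-(a + b)) =
      Gamma a * Gamma b / Gamma (a + b) := by
  have himage : (fun x : ℝ => x / (1 - x)) '' Ioo 0 1 = Ioi 0 := by
    ext y
    refine ⟨?_, fun (hy : 0 < y) => ⟨y / (1 + y), ⟨by positivity, ?_⟩, ?_⟩⟩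
    · rintro ⟨x, ⟨hx₀, hx₁⟩, rfl⟩
      exact div_pos hx₀ (sub_pos.2 hx₁)
    · rw [div_lt_one (by positivity)]; linarith
    · field_simp; ring
  have hderiv : ∀ x ∈ Ioo (0:ℝ) 1,
      HasDerivWithinAt (fun x : ℝ => x / (1 - x)) ((1 - x) ^ 2)⁻¹ (Ioo 0 1) x := by
    intro x hx
    have hx₁ : 1 - x ≠ 0 := (sub_pos.2 hx.2).ne'
    refine ((hasDerivAt_id' x).div ((hasDerivAt_id' x).const_sub 1) hx₁).hasDerivWithinAt
      |>.congr_deriv ?_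
    field_simp
    ring
  have hinj : InjOn (fun x : ℝ => x / (1 - x)) (Ioo 0 1) := by
    intro x hx y hy hxy
    have hx₁ : 1 - x ≠ 0 := (sub_pos.2 hx.2).ne'
    have hy₁ : 1 - y ≠ 0 := (sub_pos.2 hy.2).ne'
    field_simp at hxy
    linarith
  rw [← himage, integral_image_eq_integral_abs_deriv_smul measurableSet_Ioo hderiv hinj,
    ← Real.integral_rpow_mul_one_sub_rpow ha hb, intervalIntegral.integral_of_le
    zero_le_one, integral_Ioc_eq_integral_Ioo]
  refine setIntegral_congr_fun measurableSet_Ioo fun x ⟨hx₀, hx₁⟩ => ?_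
  have hy : 0 < 1 - x := sub_pos.2 hx₁
  have hsplit : (1 - x) ^ (a + b) = (1 - x) ^ (a - 1) * (1 - x) ^ (b - 1) * (1 - x) ^ 2 := by
    rw [← rpow_natCast, ← rpow_add hy, ← rpow_add hy]
    congr 1
    push_cast
    ring
  have h1 : 1 + x / (1 - x) = (1 - x)⁻¹ := by field_simp; ring
  rw [smul_eq_mul, h1, abs_of_pos (by positivity), inv_rpow hy.le, rpow_neg hy.le, inv_inv,
    div_rpow hx₀.le hy.le, hsplit]
  have : (1 - x) ^ (a - 1) ≠ 0 := (rpow_pos_of_pos hy _).ne'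
  field_simp

theorem integral_Ioi_comp_add_mul_eq_rpow_mul (ψ : ℝ → ℝ) (α : ℝ) {t : ℝ} (ht : 0 < t) :
    ∫ s in Ioi (0:ℝ), ψ (t + s) * ψ s = t ^ (2 * α + 1) *
      ∫ u in Ioi (0:ℝ), ψ (t * (1 + u)) / (t * (1 + u)) ^ α * (ψ (t * u) / (t * u) ^ α) *
        (u ^ α * (1 + u) ^ α) := by
  have hscale := integral_comp_mul_left_Ioi (fun s => ψ (t + s) * ψ s) 0 ht
  rw [mul_zero, smul_eq_mul, eq_inv_mul_iff_mul_eq₀ ht.ne'] at hscale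
  rw [← hscale, rpow_add ht, rpow_one, mul_comm _ t, mul_assoc,
    ← integral_const_mul (t ^ (2 * α))]
  congr 1
  refine setIntegral_congr_fun measurableSet_Ioi fun u (hu : 0 < u) => ?_
  have h1u : 0 < 1 + u := by positivity
  rw [mul_rpow ht.le h1u.le, mul_rpow ht.le hu.le, two_mul, rpow_add ht]
  have : t ^ α ≠ 0 := (rpow_pos_of_pos ht α).ne'
  have : u ^ α ≠ 0 := (rpow_pos_of_pos hu α).ne'
  have : (1 + u) ^ α ≠ 0 := (rpow_pos_of_pos h1u α).ne'
  rw [show t + t * u = t * (1 + u) by ring]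
  field_simp

theorem tendsto_integral_Ioi_comp_mul_mul_comp_mul {g w : ℝ → ℝ} {c C : ℝ}
    (hg : Measurable g) (hgC : ∀ x > 0, |g x| ≤ C) (hlim : Tendsto g atTop (𝓝 c))
    (hw : IntegrableOn w (Ioi 0)) :
    Tendsto (fun t => ∫ u in Ioi (0:ℝ), g (t * (1 + u)) * g (t * u) * w u) atTop
      (𝓝 (c ^ 2 * ∫ u in Ioi (0:ℝ), w u)) := by
  rw [← integral_const_mul]
  refine tendsto_integral_filter_of_dominated_convergence (fun u => C ^ 2 * ‖w u‖) ?_ ?_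
    (hw.norm.const_mul _) ?_
  · exact .of_forall fun t => ((hg.comp (by fun_prop)).aestronglyMeasurable.mul
      (hg.comp (by fun_prop)).aestronglyMeasurable).mul hw.aestronglyMeasurable
  · filter_upwards [eventually_gt_atTop 0] with t ht
    filter_upwards [ae_restrict_mem measurableSet_Ioi] with u (hu : 0 < u)
    have h₁ : ‖g (t * (1 + u))‖ ≤ C := hgC _ (by positivity)
    have h₂ : ‖g (t * u)‖ ≤ C := hgC _ (by positivity)
    rw [norm_mul, norm_mul, sq]
    gcongr
    exact (norm_nonneg _).trans h₁
  · filter_upwards [ae_restrict_mem measurableSet_Ioi] with u (hu : 0 < u)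
    rw [sq]
    exact ((hlim.comp (tendsto_id.atTop_mul_const (by positivity))).mul
      (hlim.comp (tendsto_id.atTop_mul_const hu))).mul_const _

theorem stmt_9_general (α c c₁ : ℝ) (hα : α ∈ Set.Ioo (-1 : ℝ) (-1/2))
    (ψ : ℝ → ℝ) (hmeas : Measurable ψ)
    (hlim : Tendsto (fun t => ψ t / t ^ α) atTop (nhds c))
    (hbound : ∀ t > (0:ℝ), |ψ t| ≤ c₁ * t ^ α)
    (r : ℝ → ℝ)
    (hr : ∀ t : ℝ, r t = ∫ s in Set.Ioi (0:ℝ), ψ (t + s) * ψ s) :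
    Tendsto (fun t => r t / t ^ (2 * α + 1)) atTop
      (nhds (c ^ 2 * (Real.Gamma (1 + α) * Real.Gamma (-1 - 2 * α) / Real.Gamma (-α)))) := by
  obtain ⟨hα₁, hα₂⟩ := hα
  have hbeta : ∫ u in Ioi (0:ℝ), u ^ α * (1 + u) ^ α
      = Gamma (1 + α) * Gamma (-1 - 2 * α) / Gamma (-α) := by
    have h := integral_Ioi_rpow_mul_one_add_rpow (a := 1 + α) (b := -1 - 2 * α)
      (by linarith) (by linarith)
    rwa [show 1 + α - 1 = α by ring, show 1 + α + (-1 - 2 * α) = -α by ring, neg_neg] at h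
  have hw : IntegrableOn (fun u : ℝ => u ^ α * (1 + u) ^ α) (Ioi 0) := by
    refine .of_integral_ne_zero ?_
    rw [hbeta]
    exact (div_pos (mul_pos (Gamma_pos_of_pos (by linarith)) (Gamma_pos_of_pos (by linarith)))
      (Gamma_pos_of_pos (by linarith))).ne'
  have hg_bound : ∀ x > (0:ℝ), |ψ x / x ^ α| ≤ c₁ := fun x hx => by
    rw [abs_div, abs_of_pos (rpow_pos_of_pos hx α), div_le_iff₀ (rpow_pos_of_pos hx α)]
    exact hbound x hx
  have hconv := tendsto_integral_Ioi_comp_mul_mul_comp_mul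
    (g := fun x => ψ x / x ^ α) (by fun_prop) hg_bound hlim hw
  rw [hbeta] at hconv
  refine hconv.congr' ?_
  filter_upwards [eventually_gt_atTop 0] with t ht
  rw [hr, integral_Ioi_comp_add_mul_eq_rpow_mul ψ α ht,
    mul_div_cancel_left₀ _ (rpow_pos_of_pos ht _).ne']

theorem stmt_9 (α c c₁ : ℝ) (hα : α ∈ Set.Ioo (-1 : ℝ) (-1/2)) (hc : c ≠ 0) (hc₁ : 0 < c₁)
    (ψ : ℝ → ℝ) (hmeas : Measurable ψ)
    (hlim : Tendsto (fun t => ψ t / t ^ α) atTop (nhds c))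
    (hbound : ∀ t > (0:ℝ), |ψ t| ≤ c₁ * t ^ α)
    (r : ℝ → ℝ)
    (hr : ∀ t : ℝ, r t = ∫ s in Set.Ioi (0:ℝ), ψ (t + s) * ψ s) :
    Tendsto (fun t => r t / t ^ (2 * α + 1)) atTop
      (nhds (c ^ 2 * (Real.Gamma (1 + α) * Real.Gamma (-1 - 2 * α) / Real.Gamma (-α)))) :=
  stmt_9_general α c c₁ hα ψ hmeas hlim hbound r hr
end

section
/- Let ψ ∈ L¹(0,∞) ∩ L²(0,∞), c ≠ 0, α < -1, and suppose ψ(t)/t^α → c as t → ∞. Define r(t) = ∫_0^∞ ψ(t+s) ψ(s) ds. Then r(t)/t^α → c ∫_0^∞ ψ(s) ds as t → ∞. -/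
open MeasureTheory Real Set Filter
open scoped Topology

/-! Write `r t / t ^ α = ∫_0^∞ (ψ (t + s) / t ^ α) ψ s ds`. For fixed `s`, `ψ (t + s) / t ^ α → c`
because `(t + s) ^ α ~ t ^ α`. Since `α ≤ 0`, `t ^ α` is decreasing, so for large `t` the tail bound
`|ψ u| ≤ (|c| + 1) u ^ α` gives `|ψ (t + s)| / t ^ α ≤ |c| + 1` for all `s ≥ 0`; dominated
convergence with majorant `(|c| + 1) |ψ|` concludes. -/

theorem tendsto_rpow_add_div_rpow_atTop (α s : ℝ) :
    Tendsto (fun t => (t + s) ^ α / t ^ α) atTop (𝓝 1) := by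
  have h_ratio : Tendsto (fun t => 1 + s / t) atTop (𝓝 1) := by
    simpa using (tendsto_const_nhds (x := (1 : ℝ))).add (tendsto_const_nhds.div_atTop tendsto_id)
  have h_pow : Tendsto (fun t => (1 + s / t) ^ α) atTop (𝓝 1) := by
    simpa [Function.comp_def] using
      (continuousAt_rpow_const 1 α (Or.inl one_ne_zero)).tendsto.comp h_ratio
  refine h_pow.congr' ?_
  filter_upwards [eventually_gt_atTop 0, eventually_gt_atTop (-s)] with t ht hts
  rw [← div_rpow (by linarith) ht.le, add_div, div_self ht.ne']

theorem tendsto_comp_add_div_rpow_atTop {ψ : ℝ → ℝ} {α c : ℝ}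
    (hlim : Tendsto (fun t => ψ t / t ^ α) atTop (𝓝 c)) (s : ℝ) :
    Tendsto (fun t => ψ (t + s) / t ^ α) atTop (𝓝 c) := by
  have h_shift := hlim.comp (tendsto_atTop_add_const_right atTop s tendsto_id)
  simpa using (h_shift.mul (tendsto_rpow_add_div_rpow_atTop α s)).congr' <| by
    filter_upwards [eventually_gt_atTop 0, eventually_gt_atTop (-s)] with t ht hts
    have : (t + s) ^ α ≠ 0 := (rpow_pos_of_pos (by linarith) α).ne'
    simp only [Function.comp_apply, id]
    field_simp

theorem eventually_abs_le_rpow_of_tendsto_div_rpow {ψ : ℝ → ℝ} {α c : ℝ} (hα : α ≤ 0)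
    (hlim : Tendsto (fun t => ψ t / t ^ α) atTop (𝓝 c)) :
    ∀ᶠ t in atTop, ∀ u, t ≤ u → |ψ u| ≤ (|c| + 1) * t ^ α := by
  obtain ⟨T, hT⟩ := eventually_atTop.1 <|
    (hlim.abs.eventually (eventually_le_nhds (lt_add_one |c|))).and (eventually_gt_atTop 0)
  filter_upwards [eventually_ge_atTop T, eventually_gt_atTop 0] with t hTt ht u htu
  obtain ⟨h_bound, hu⟩ := hT u (hTt.trans htu)
  have hu_pow : 0 < u ^ α := rpow_pos_of_pos hu α
  rw [abs_div, abs_of_pos hu_pow, div_le_iff₀ hu_pow] at h_bound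
  exact h_bound.trans <|
    mul_le_mul_of_nonneg_left (rpow_le_rpow_of_nonpos ht htu hα) (by positivity)

theorem MeasureTheory.AEStronglyMeasurable.comp_const_add_restrict_Ioi {ψ : ℝ → ℝ} {t : ℝ}
    (ht : 0 ≤ t) (hψ : AEStronglyMeasurable ψ (volume.restrict (Ioi 0))) :
    AEStronglyMeasurable (fun s => ψ (t + s)) (volume.restrict (Ioi 0)) := by
  have h_pres : MeasurePreserving (t + ·) (volume.restrict (Ioi 0)) (volume.restrict (Ioi t)) := by
    simpa using
      (measurePreserving_add_left volume t).restrict_preimage (s := Ioi t) measurableSet_Ioi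
  exact (hψ.mono_set (Ioi_subset_Ioi ht)).comp_measurePreserving h_pres

theorem tendsto_setIntegral_Ioi_comp_add_mul_div_rpow {ψ φ : ℝ → ℝ} {α c : ℝ} (hα : α ≤ 0)
    (hψ : AEStronglyMeasurable ψ (volume.restrict (Ioi 0)))
    (hφ : IntegrableOn φ (Ioi 0))
    (hlim : Tendsto (fun t => ψ t / t ^ α) atTop (𝓝 c)) :
    Tendsto (fun t => (∫ s in Ioi 0, ψ (t + s) * φ s) / t ^ α) atTop
      (𝓝 (c * ∫ s in Ioi 0, φ s)) := by
  have h_eq (t : ℝ) : (∫ s in Ioi 0, ψ (t + s) * φ s) / t ^ α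
      = ∫ s in Ioi 0, ψ (t + s) / t ^ α * φ s := by
    rw [← integral_div]
    congr with s
    ring
  simp_rw [h_eq, ← integral_const_mul]
  refine tendsto_integral_filter_of_dominated_convergence (fun s => (|c| + 1) * |φ s|) ?_ ?_
    (hφ.abs.const_mul _) ?_
  · filter_upwards [eventually_ge_atTop 0] with t ht
    simp_rw [div_eq_mul_inv]
    exact ((hψ.comp_const_add_restrict_Ioi ht).mul_const _).mul hφ.aestronglyMeasurable
  · filter_upwards [eventually_abs_le_rpow_of_tendsto_div_rpow hα hlim, eventually_gt_atTop 0]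
      with t h_bound ht
    filter_upwards [self_mem_ae_restrict measurableSet_Ioi] with s hs
    have ht_pow : 0 < t ^ α := rpow_pos_of_pos ht α
    have h_ratio : |ψ (t + s) / t ^ α| ≤ |c| + 1 := by
      rw [abs_div, abs_of_pos ht_pow, div_le_iff₀ ht_pow]
      exact h_bound _ (le_add_of_nonneg_right hs.le)
    rw [norm_mul, Real.norm_eq_abs, Real.norm_eq_abs]
    exact mul_le_mul_of_nonneg_right h_ratio (abs_nonneg _)
  · exact Eventually.of_forall fun s => (tendsto_comp_add_div_rpow_atTop hlim s).mul_const (φ s)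

theorem stmt_10_general (α c : ℝ) (hα : α < -1) (ψ : ℝ → ℝ)
    (hL1 : IntegrableOn ψ (Set.Ioi (0:ℝ)) volume)
    (hlim : Tendsto (fun t => ψ t / t ^ α) atTop (nhds c))
    (r : ℝ → ℝ)
    (hr : ∀ t : ℝ, r t = ∫ s in Set.Ioi (0:ℝ), ψ (t + s) * ψ s) :
    Tendsto (fun t => r t / t ^ α) atTop (nhds (c * ∫ s in Set.Ioi (0:ℝ), ψ s)) := by
  simp_rw [hr]
  exact tendsto_setIntegral_Ioi_comp_add_mul_div_rpow (by linarith) hL1.aestronglyMeasurable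
    hL1 hlim

theorem stmt_10 (α c : ℝ) (hα : α < -1) (hc : c ≠ 0) (ψ : ℝ → ℝ)
    (hL1 : IntegrableOn ψ (Set.Ioi (0:ℝ)) volume)
    (hL2 : IntegrableOn (fun s => ψ s ^ 2) (Set.Ioi (0:ℝ)) volume)
    (hlim : Tendsto (fun t => ψ t / t ^ α) atTop (nhds c))
    (r : ℝ → ℝ)
    (hr : ∀ t : ℝ, r t = ∫ s in Set.Ioi (0:ℝ), ψ (t + s) * ψ s) :
    Tendsto (fun t => r t / t ^ α) atTop (nhds (c * ∫ s in Set.Ioi (0:ℝ), ψ s)) :=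
  stmt_10_general α c hα ψ hL1 hlim r hr
end

section
/- Let λ > 0, α ∈ ℝ, c ≠ 0, a > 0, and let f : ℝ → ℝ be continuously differentiable on [a, ∞) with f'(t)/t^α → c as t → ∞ and f locally integrable, zero on (-∞,0). Define ψ_f(t) = f(t) - λ e^{-λ t} ∫_{-∞}^t e^{λ s} f(s) ds. Then ψ_f(t)/t^α → c/λ as t → ∞. -/
/-!
With `Φ(t) = e^{λt} f(t) - λ ∫_{-∞}^t e^{λs} f(s) ds` we have `ψ_f(t) / t^α = Φ(t) / (e^{λt} t^α)`.
The `λ`-terms cancel in `Φ'`, leaving `Φ'(t) = e^{λt} f'(t)`, while the denominator tends to `+∞`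
with derivative `e^{λt} t^α (λ + α/t)`. The ratio of derivatives tends to `c/λ`, so the `∞/∞`
form of L'Hôpital's rule concludes.
-/

open MeasureTheory Real Set Filter Topology

-- Cauchy's mean value theorem on `[S, t]` for `S` beyond which `f'/g'` is `ε/2`-close to `L`;
-- the fixed term `f S - L * g S` is then negligible against `g t → ∞`.
theorem lhopital_atTop_of_tendsto_atTop {f g f' g' : ℝ → ℝ} {L : ℝ}
    (hff' : ∀ᶠ x in atTop, HasDerivAt f (f' x) x) (hgg' : ∀ᶠ x in atTop, HasDerivAt g (g' x) x)
    (hg' : ∀ᶠ x in atTop, g' x ≠ 0) (hg : Tendsto g atTop atTop)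
    (hdiv : Tendsto (fun x => f' x / g' x) atTop (𝓝 L)) :
    Tendsto (fun x => f x / g x) atTop (𝓝 L) := by
  rw [Metric.tendsto_nhds]
  intro ε hε
  obtain ⟨S, hS⟩ := (hff'.and <| hgg'.and <| hg'.and <| (hg.eventually_ge_atTop 0).and <|
    Metric.tendsto_nhds.1 hdiv (ε / 2) (half_pos hε)).exists_forall_of_atTop
  have hgS : 0 ≤ g S := (hS S le_rfl).2.2.2.1
  set C := f S - L * g S
  filter_upwards [eventually_gt_atTop S, hg.eventually_gt_atTop (g S),
    hg.eventually_gt_atTop (2 * |C| / ε)] with t hSt hgSt hCt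
  have hcont : ∀ {h h' : ℝ → ℝ}, (∀ x, S ≤ x → HasDerivAt h (h' x) x) → ContinuousOn h (Icc S t) :=
    fun hd x hx => (hd x hx.1).continuousAt.continuousWithinAt
  obtain ⟨ξ, hξ, hmvt⟩ := exists_ratio_hasDerivAt_eq_ratio_slope f f' hSt
    (hcont fun x hx => (hS x hx).1) (fun x hx => (hS x hx.1.le).1)
    g g' (hcont fun x hx => (hS x hx).2.1) (fun x hx => (hS x hx.1.le).2.1)
  obtain ⟨-, -, hg'ξ, -, hξL⟩ := hS ξ hξ.1.le
  have hslope : |f t - f S - L * (g t - g S)| ≤ ε / 2 * (g t - g S) := by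
    have : f t - f S - L * (g t - g S) = (g t - g S) * (f' ξ / g' ξ - L) := by
      field_simp
      linarith
    rw [this, abs_mul, abs_of_pos (sub_pos.2 hgSt), mul_comm]
    gcongr
    exact (Real.dist_eq _ _ ▸ hξL).le
  have hgt : 0 < g t := hgS.trans_lt hgSt
  have hC : |C| < ε / 2 * g t := by
    rw [div_lt_iff₀ hε] at hCt
    linarith
  rw [Real.dist_eq, div_sub' hgt.ne', abs_div, abs_of_pos hgt, div_lt_iff₀ hgt]
  calc |f t - g t * L| = |(f t - f S - L * (g t - g S)) + C| := by simp only [C]; congr 1; ring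
    _ ≤ |f t - f S - L * (g t - g S)| + |C| := abs_add_le _ _
    _ < ε * g t := by linarith [mul_nonneg hε.le hgS]

theorem hasDerivAt_exp_const_mul (lam t : ℝ) :
    HasDerivAt (fun x => exp (lam * x)) (exp (lam * t) * lam) t :=
  ((hasDerivAt_id t).const_mul lam).exp.congr_deriv (by simp)

theorem hasDerivAt_integral_Iic {g : ℝ → ℝ} {t : ℝ} (hg : ∀ x, IntegrableOn g (Iic x))
    (hcont : ContinuousAt g t) : HasDerivAt (fun x => ∫ s in Iic x, g s) (g t) t := by
  have hsplit : (fun x => ∫ s in Iic x, g s) =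
      fun x => (∫ s in Iic (t - 1), g s) + ∫ s in (t - 1)..x, g s := by
    funext x
    rw [← intervalIntegral.integral_Iic_sub_Iic (hg _) (hg x)]
    ring
  have hmeas : StronglyMeasurableAtFilter g (𝓝 t) :=
    ⟨Iio (t + 1), Iio_mem_nhds (by linarith),
      ((hg (t + 1)).mono_set Iio_subset_Iic_self).aestronglyMeasurable⟩
  have hint : IntervalIntegrable g volume (t - 1) t :=
    (intervalIntegrable_iff_integrableOn_Ioc_of_le (by linarith)).2
      ((hg t).mono_set Ioc_subset_Iic_self)
  rw [hsplit]
  exact (intervalIntegral.integral_hasDerivAt_right hint hmeas hcont).const_add _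

theorem hasDerivAt_exp_mul_sub_integral_Iic {f : ℝ → ℝ} {f' lam t : ℝ} (hf : HasDerivAt f f' t)
    (hint : ∀ x, IntegrableOn (fun s => exp (lam * s) * f s) (Iic x)) :
    HasDerivAt (fun x => exp (lam * x) * f x - lam * ∫ s in Iic x, exp (lam * s) * f s)
      (exp (lam * t) * f') t := by
  have hexp := hasDerivAt_exp_const_mul lam t
  have hF := hasDerivAt_integral_Iic hint (hexp.continuousAt.mul hf.continuousAt)
  exact ((hexp.mul hf).sub (hF.const_mul lam)).congr_deriv (by ring)

theorem hasDerivAt_exp_mul_rpow (lam α : ℝ) {t : ℝ} (ht : 0 < t) :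
    HasDerivAt (fun x => exp (lam * x) * x ^ α) (exp (lam * t) * t ^ α * (lam + α / t)) t := by
  refine ((hasDerivAt_exp_const_mul lam t).mul
    (hasDerivAt_rpow_const (p := α) (Or.inl ht.ne'))).congr_deriv ?_
  rw [rpow_sub_one ht.ne']
  field_simp

theorem tendsto_exp_mul_rpow_atTop {lam : ℝ} (hlam : 0 < lam) (α : ℝ) :
    Tendsto (fun x => exp (lam * x) * x ^ α) atTop atTop := by
  refine (tendsto_exp_mul_div_rpow_atTop (-α) lam hlam).congr' ?_
  filter_upwards [eventually_ge_atTop 0] with x hx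
  rw [rpow_neg hx, div_inv_eq_mul]

theorem stmt_12_general (lam α c a : ℝ) (hlam : 0 < lam)
    (f ψ : ℝ → ℝ)
    (hdiff : ContDiffOn ℝ 1 f (Set.Ici a))
    (hderiv : Tendsto (fun t => deriv f t / t ^ α) atTop (nhds c))
    (hint : ∀ t : ℝ, IntegrableOn (fun s => Real.exp (lam * s) * f s) (Set.Iic t) volume)
    (hψ : ∀ t : ℝ, ψ t = f t - lam * Real.exp (-lam * t) * ∫ s in Set.Iic t, Real.exp (lam * s) * f s) :
    Tendsto (fun t => ψ t / t ^ α) atTop (nhds (c / lam)) := by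
  have hfderiv : ∀ᶠ t in atTop, HasDerivAt f (deriv f t) t := by
    filter_upwards [eventually_gt_atTop a] with t ht
    exact ((hdiff.differentiableOn one_ne_zero).differentiableAt (Ici_mem_nhds ht)).hasDerivAt
  have hfactor : Tendsto (fun t : ℝ => lam + α / t) atTop (𝓝 lam) := by
    simpa using tendsto_const_nhds.add ((tendsto_const_nhds (x := α)).div_atTop tendsto_id)
  have hratio : Tendsto
      (fun t => exp (lam * t) * deriv f t / (exp (lam * t) * t ^ α * (lam + α / t)))
      atTop (𝓝 (c / lam)) := by
    refine (hderiv.div hfactor hlam.ne').congr fun t => ?_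
    rw [mul_assoc, mul_div_mul_left _ _ (exp_pos _).ne', Pi.div_apply, div_div]
  refine (lhopital_atTop_of_tendsto_atTop
      (hfderiv.mono fun t ht => hasDerivAt_exp_mul_sub_integral_Iic ht hint)
      ((eventually_gt_atTop 0).mono fun t ht => hasDerivAt_exp_mul_rpow lam α ht)
      ?_ (tendsto_exp_mul_rpow_atTop hlam α) hratio).congr' ?_
  · filter_upwards [eventually_gt_atTop 0, hfactor.eventually (lt_mem_nhds (half_lt_self hlam))]
      with t ht hhalf
    have : 0 < lam + α / t := by linarith
    positivity
  · filter_upwards [eventually_gt_atTop 0] with t ht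
    rw [hψ t, neg_mul, exp_neg]
    field_simp

theorem stmt_12 (lam α c a : ℝ) (hlam : 0 < lam) (hc : c ≠ 0) (ha : 0 < a)
    (f ψ : ℝ → ℝ)
    (hf : LocallyIntegrable f volume)
    (hzero : ∀ t < (0:ℝ), f t = 0)
    (hdiff : ContDiffOn ℝ 1 f (Set.Ici a))
    (hderiv : Tendsto (fun t => deriv f t / t ^ α) atTop (nhds c))
    (hint : ∀ t : ℝ, IntegrableOn (fun s => Real.exp (lam * s) * f s) (Set.Iic t) volume)
    (hψ : ∀ t : ℝ, ψ t = f t - lam * Real.exp (-lam * t) * ∫ s in Set.Iic t, Real.exp (lam * s) * f s) :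
    Tendsto (fun t => ψ t / t ^ α) atTop (nhds (c / lam)) :=
  stmt_12_general lam α c a hlam f ψ hdiff hderiv hint hψ
end

section
/- Let λ > 0, H ∈ (0,1), α = H - 1/2 ≥ -1/2 (H ≠ 1/2 allowed), and define ψ(t) = t^α - λ e^{-λ t} ∫_0^t e^{λ u} u^α du for t > 0. Then ψ(t)/t^α → 1 as t → 0⁺, and ψ(t)/t^{α-1} → α/λ as t → ∞. -/
/-!
Write `ψ = fracOUKernel lam α`. Near `0`, bounding `exp (lam * u) ≤ exp (lam * t)` under the
integral gives `t ^ α * (1 - lam * t / (α + 1)) ≤ ψ t ≤ t ^ α`.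

At infinity, `exp (lam * u) * (u ^ α - α / lam * u ^ (α - 1)) / lam` is an antiderivative of
`exp (lam * u) * u ^ α` up to `α * (α - 1) / lam ^ 2 * exp (lam * u) * u ^ (α - 2)`,
whence `ψ t = α / lam * t ^ (α - 1) - exp (-lam * t) * (c + α * (α - 1) / lam * L t)` for
`t ≥ 1`, with `L t = ∫ u in 1..t, exp (lam * u) * u ^ (α - 2)`. Finally
`L t = o(exp (lam * t) * t ^ (α - 1))`: bound `u ^ (α - 2)` by `1` on `[1, t / 2]` and by
`(t / 2) ^ (α - 2)` on `[t / 2, t]`.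
-/

open MeasureTheory Real Set Filter Topology

noncomputable def fracOUKernel (lam α t : ℝ) : ℝ :=
  t ^ α - lam * exp (-lam * t) * ∫ u in (0:ℝ)..t, exp (lam * u) * u ^ α

lemma intervalIntegrable_exp_mul_mul_rpow {lam β a b : ℝ}
    (h : -1 < β ∨ (0:ℝ) ∉ uIcc a b) :
    IntervalIntegrable (fun u => exp (lam * u) * u ^ β) volume a b :=
  (h.elim intervalIntegral.intervalIntegrable_rpow'
    fun h0 => intervalIntegral.intervalIntegrable_rpow (Or.inr h0)).continuousOn_mul (by fun_prop)

lemma integral_exp_mul (lam a b : ℝ) (hlam : lam ≠ 0) :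
    ∫ u in a..b, exp (lam * u) = (exp (lam * b) - exp (lam * a)) / lam := by
  rw [intervalIntegral.integral_comp_mul_left exp hlam, integral_exp, smul_eq_mul, inv_mul_eq_div]

section

variable {lam β : ℝ}

lemma integral_exp_mul_mul_rpow_le (hlam : 0 ≤ lam) (hβ : -1 < β) {t : ℝ} (ht : 0 ≤ t) :
    ∫ u in (0:ℝ)..t, exp (lam * u) * u ^ β ≤ exp (lam * t) * (t ^ (β + 1) / (β + 1)) :=
  calc ∫ u in (0:ℝ)..t, exp (lam * u) * u ^ β
      ≤ ∫ u in (0:ℝ)..t, exp (lam * t) * u ^ β :=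
        intervalIntegral.integral_mono_on ht (intervalIntegrable_exp_mul_mul_rpow (Or.inl hβ))
          ((intervalIntegral.intervalIntegrable_rpow' hβ).const_mul _) fun u hu =>
          mul_le_mul_of_nonneg_right (exp_le_exp.2 (by nlinarith [hu.2]))
            (rpow_nonneg hu.1 β)
    _ = exp (lam * t) * (t ^ (β + 1) / (β + 1)) := by
        rw [intervalIntegral.integral_const_mul, integral_rpow (Or.inl hβ),
          zero_rpow (by linarith), sub_zero]

lemma integral_exp_mul_mul_rpow_eq (hlam : lam ≠ 0) {a b : ℝ} (ha : 0 < a) (hab : a ≤ b) :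
    ∫ u in a..b, exp (lam * u) * u ^ β =
      exp (lam * b) * (b ^ β - β / lam * b ^ (β - 1)) / lam
        - exp (lam * a) * (a ^ β - β / lam * a ^ (β - 1)) / lam
        + β * (β - 1) / lam ^ 2 * ∫ u in a..b, exp (lam * u) * u ^ (β - 2) := by
  have h0 : (0:ℝ) ∉ uIcc a b := notMem_uIcc_of_lt ha (ha.trans_le hab)
  have hint (γ : ℝ) := intervalIntegrable_exp_mul_mul_rpow (lam := lam) (β := γ) (Or.inr h0)
  have key : ∫ u in a..b, (exp (lam * u) * u ^ β
        - β * (β - 1) / lam ^ 2 * (exp (lam * u) * u ^ (β - 2))) =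
      exp (lam * b) * (b ^ β - β / lam * b ^ (β - 1)) / lam
        - exp (lam * a) * (a ^ β - β / lam * a ^ (β - 1)) / lam := by
    refine intervalIntegral.integral_eq_sub_of_hasDerivAt
      (f := fun u => exp (lam * u) * (u ^ β - β / lam * u ^ (β - 1)) / lam) (fun x hx => ?_)
      ((hint β).sub ((hint (β - 2)).const_mul _))
    have hx0 : x ≠ 0 := fun h => h0 (h ▸ hx)
    have hexp : HasDerivAt (fun u => exp (lam * u)) (exp (lam * x) * lam) x := by
      simpa using ((hasDerivAt_id x).const_mul lam).exp
    have hpow (γ : ℝ) : HasDerivAt (fun u => u ^ γ) (γ * x ^ (γ - 1)) x :=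
      hasDerivAt_rpow_const (Or.inl hx0)
    refine ((hexp.mul ((hpow β).sub ((hpow (β - 1)).const_mul (β / lam)))).div_const
      lam).congr_deriv ?_
    rw [show β - 1 - 1 = β - 2 by ring, Pi.sub_apply]
    field_simp
    ring
  rw [intervalIntegral.integral_sub (hint β) ((hint (β - 2)).const_mul _),
    intervalIntegral.integral_const_mul] at key
  linarith

lemma integral_one_exp_mul_mul_rpow_le (hlam : 0 < lam) (hβ : β ≤ 0) {t : ℝ} (ht : 1 ≤ t) :
    ∫ u in (1:ℝ)..t, exp (lam * u) * u ^ β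
      ≤ t * exp (lam * t / 2) + (t / 2) ^ β * exp (lam * t) / lam := by
  have ht2 : 0 < t / 2 := by linarith
  have hpt : ∀ u ∈ Icc 1 t,
      exp (lam * u) * u ^ β ≤ exp (lam * t / 2) + (t / 2) ^ β * exp (lam * u) := by
    rintro u ⟨hu1, -⟩
    have h1 := exp_pos (lam * t / 2)
    have h2 := mul_pos (rpow_pos_of_pos ht2 β) (exp_pos (lam * u))
    rcases le_total u (t / 2) with hu | hu
    · have : exp (lam * u) * u ^ β ≤ exp (lam * t / 2) * 1 :=
        mul_le_mul (exp_le_exp.2 (by nlinarith)) (rpow_le_one_of_one_le_of_nonpos hu1 hβ)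
          (rpow_nonneg (by linarith) β) h1.le
      linarith
    · have : exp (lam * u) * u ^ β ≤ exp (lam * u) * (t / 2) ^ β :=
        mul_le_mul_of_nonneg_left (rpow_le_rpow_of_nonpos ht2 hu hβ) (exp_pos _).le
      linarith
  calc ∫ u in (1:ℝ)..t, exp (lam * u) * u ^ β
      ≤ ∫ u in (1:ℝ)..t, (exp (lam * t / 2) + (t / 2) ^ β * exp (lam * u)) :=
        intervalIntegral.integral_mono_on ht
          (intervalIntegrable_exp_mul_mul_rpow (Or.inr (notMem_uIcc_of_lt one_pos (by linarith))))
          ((by fun_prop : Continuous _).intervalIntegrable _ _) hpt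
    _ = (t - 1) * exp (lam * t / 2) + (t / 2) ^ β * ((exp (lam * t) - exp (lam * 1)) / lam) := by
        rw [intervalIntegral.integral_add intervalIntegrable_const
          ((by fun_prop : Continuous _).intervalIntegrable _ _),
          intervalIntegral.integral_const, intervalIntegral.integral_const_mul,
          integral_exp_mul lam 1 t hlam.ne', smul_eq_mul]
    _ ≤ t * exp (lam * t / 2) + (t / 2) ^ β * exp (lam * t) / lam := by
        have := exp_pos (lam * t / 2)
        have : (t / 2) ^ β * ((exp (lam * t) - exp (lam * 1)) / lam)
            ≤ (t / 2) ^ β * exp (lam * t) / lam := by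
          rw [mul_div_assoc]
          gcongr
          linarith [exp_pos (lam * 1)]
        nlinarith

lemma tendsto_rpow_mul_exp_neg_mul_mul_integral (hlam : 0 < lam) (hβ : β ≤ 0) :
    Tendsto (fun t => t ^ (-β - 1) * exp (-lam * t) * ∫ u in (1:ℝ)..t, exp (lam * u) * u ^ β)
      atTop (𝓝 0) := by
  have hbound : Tendsto (fun t => t ^ (-β) * exp (-(lam / 2) * t) + 2 ^ (-β) / lam * t⁻¹)
      atTop (𝓝 0) := by
    simpa using (tendsto_rpow_mul_exp_neg_mul_atTop_nhds_zero (-β) (lam / 2) (by positivity)).add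
      (tendsto_inv_atTop_zero.const_mul (2 ^ (-β) / lam))
  refine tendsto_of_tendsto_of_tendsto_of_le_of_le' tendsto_const_nhds hbound ?_ ?_
  · filter_upwards [eventually_ge_atTop 1] with t ht
    have : 0 ≤ ∫ u in (1:ℝ)..t, exp (lam * u) * u ^ β :=
      intervalIntegral.integral_nonneg ht fun u hu =>
        mul_nonneg (exp_pos _).le (rpow_nonneg (by linarith [hu.1]) β)
    positivity
  · filter_upwards [eventually_ge_atTop 1] with t ht
    have ht0 : 0 < t := by linarith
    calc t ^ (-β - 1) * exp (-lam * t) * ∫ u in (1:ℝ)..t, exp (lam * u) * u ^ β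
        ≤ t ^ (-β - 1) * exp (-lam * t)
            * (t * exp (lam * t / 2) + (t / 2) ^ β * exp (lam * t) / lam) := by
          gcongr
          exact integral_one_exp_mul_mul_rpow_le hlam hβ ht
      _ = t ^ (-β) * exp (-(lam / 2) * t) + 2 ^ (-β) / lam * t⁻¹ := by
          have hE : exp (lam * t) = exp (lam * t / 2) * exp (lam * t / 2) := by
            rw [← exp_add]; ring_nf
          rw [rpow_sub_one ht0.ne', rpow_neg ht0.le, rpow_neg zero_le_two,
            div_rpow ht0.le zero_le_two, neg_mul, exp_neg, neg_mul, exp_neg,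
            show lam / 2 * t = lam * t / 2 by ring, hE]
          field_simp

end

section

variable {lam α : ℝ}

lemma fracOUKernel_le_rpow (hlam : 0 ≤ lam) {t : ℝ} (ht : 0 ≤ t) :
    fracOUKernel lam α t ≤ t ^ α := by
  have hK : 0 ≤ ∫ u in (0:ℝ)..t, exp (lam * u) * u ^ α :=
    intervalIntegral.integral_nonneg ht fun u hu => mul_nonneg (exp_pos _).le (rpow_nonneg hu.1 α)
  unfold fracOUKernel
  nlinarith [mul_nonneg hlam (exp_pos (-lam * t)).le]

lemma rpow_mul_sub_le_fracOUKernel (hlam : 0 ≤ lam) (hα : -1 < α) {t : ℝ} (ht : 0 < t) :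
    t ^ α * (1 - lam * t / (α + 1)) ≤ fracOUKernel lam α t := by
  have hE : exp (-lam * t) * exp (lam * t) = 1 := by rw [← exp_add]; simp
  have : lam * exp (-lam * t) * ∫ u in (0:ℝ)..t, exp (lam * u) * u ^ α
      ≤ lam * t / (α + 1) * t ^ α :=
    calc _ ≤ lam * exp (-lam * t) * (exp (lam * t) * (t ^ (α + 1) / (α + 1))) :=
          mul_le_mul_of_nonneg_left (integral_exp_mul_mul_rpow_le hlam hα ht.le) (by positivity)
      _ = lam * t / (α + 1) * t ^ α := by
        rw [rpow_add_one ht.ne']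
        linear_combination (lam * (t ^ α * t / (α + 1))) * hE
  unfold fracOUKernel
  linarith

theorem tendsto_fracOUKernel_div_rpow_nhdsGT_zero (hlam : 0 ≤ lam) (hα : -1 < α) :
    Tendsto (fun t => fracOUKernel lam α t / t ^ α) (𝓝[>] 0) (𝓝 1) := by
  have hlow : Tendsto (fun t : ℝ => 1 - lam * t / (α + 1)) (𝓝[>] 0) (𝓝 1) := by
    have : Continuous fun t : ℝ => 1 - lam * t / (α + 1) := by fun_prop
    simpa using (this.tendsto 0).mono_left nhdsWithin_le_nhds
  refine tendsto_of_tendsto_of_tendsto_of_le_of_le' hlow tendsto_const_nhds ?_ ?_ <;>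
    filter_upwards [self_mem_nhdsWithin] with t (ht : 0 < t)
  · rw [le_div_iff₀ (rpow_pos_of_pos ht α), mul_comm]
    exact rpow_mul_sub_le_fracOUKernel hlam hα ht
  · rw [div_le_one (rpow_pos_of_pos ht α)]
    exact fracOUKernel_le_rpow hlam ht.le

lemma exists_fracOUKernel_eq (hlam : lam ≠ 0) (hα : -1 < α) :
    ∃ c : ℝ, ∀ t, 1 ≤ t → fracOUKernel lam α t = α / lam * t ^ (α - 1)
      - exp (-lam * t)
        * (c + α * (α - 1) / lam * ∫ u in (1:ℝ)..t, exp (lam * u) * u ^ (α - 2)) := by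
  refine ⟨lam * (∫ u in (0:ℝ)..1, exp (lam * u) * u ^ α) - exp lam * (1 - α / lam),
    fun t ht => ?_⟩
  have hsplit := intervalIntegral.integral_add_adjacent_intervals
    (intervalIntegrable_exp_mul_mul_rpow (lam := lam) (a := 0) (b := 1) (Or.inl hα))
    (intervalIntegrable_exp_mul_mul_rpow (Or.inl hα) (b := t))
  have hpow : t ^ α = t ^ (α - 1) * t := by rw [← rpow_add_one (by linarith)]; simp
  unfold fracOUKernel
  rw [← hsplit, integral_exp_mul_mul_rpow_eq hlam one_pos ht, one_rpow, one_rpow, mul_one, hpow,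
    neg_mul, exp_neg]
  field_simp
  ring

theorem tendsto_fracOUKernel_div_rpow_sub_one_atTop (hlam : 0 < lam) (hα : -1 < α)
    (hα' : α ≤ 2) :
    Tendsto (fun t => fracOUKernel lam α t / t ^ (α - 1)) atTop (𝓝 (α / lam)) := by
  obtain ⟨c, hc⟩ := exists_fracOUKernel_eq hlam.ne' hα
  have hexp := tendsto_rpow_mul_exp_neg_mul_atTop_nhds_zero (1 - α) lam hlam
  have hrem := tendsto_rpow_mul_exp_neg_mul_mul_integral hlam (β := α - 2) (by linarith)
  rw [show -(α - 2) - 1 = 1 - α by ring] at hrem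
  have hlim := (tendsto_const_nhds (x := α / lam)).sub
    ((hexp.const_mul c).add (hrem.const_mul (α * (α - 1) / lam)))
  rw [mul_zero, mul_zero, add_zero, sub_zero] at hlim
  refine hlim.congr' ?_
  filter_upwards [eventually_ge_atTop 1] with t ht
  have ht0 : 0 < t := by linarith
  rw [hc t ht, show 1 - α = -(α - 1) by ring, rpow_neg ht0.le]
  have := rpow_pos_of_pos ht0 (α - 1)
  field_simp

end

theorem stmt_13_general (lam H : ℝ) (hlam : 0 < lam) (hH : H ∈ Set.Ioo (0:ℝ) 1)
    (α : ℝ) (hα : α = H - 1/2)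
    (ψ : ℝ → ℝ)
    (hψ : ∀ t > (0:ℝ), ψ t = t ^ α - lam * Real.exp (-lam * t) * ∫ u in (0:ℝ)..t, Real.exp (lam * u) * u ^ α) :
    Tendsto (fun t => ψ t / t ^ α) (nhdsWithin 0 (Set.Ioi 0)) (nhds 1) ∧
    Tendsto (fun t => ψ t / t ^ (α - 1)) atTop (nhds (α / lam)) := by
  have hα₁ : -1 < α := by linarith [hH.1]
  have hα₂ : α ≤ 2 := by linarith [hH.2]
  have hψ₀ : ∀ᶠ t in 𝓝[>] 0, ψ t = fracOUKernel lam α t :=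
    eventually_nhdsWithin_of_forall hψ
  have hψ_top : ∀ᶠ t in atTop, ψ t = fracOUKernel lam α t := (eventually_gt_atTop 0).mono hψ
  exact ⟨(tendsto_fracOUKernel_div_rpow_nhdsGT_zero hlam.le hα₁).congr'
      (hψ₀.mono fun t h => by simp only [h]),
    (tendsto_fracOUKernel_div_rpow_sub_one_atTop hlam hα₁ hα₂).congr'
      (hψ_top.mono fun t h => by simp only [h])⟩

theorem stmt_13 (lam H : ℝ) (hlam : 0 < lam) (hH : H ∈ Set.Ioo (0:ℝ) 1) (hH2 : H ≠ 1/2)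
    (α : ℝ) (hα : α = H - 1/2)
    (ψ : ℝ → ℝ)
    (hψ : ∀ t > (0:ℝ), ψ t = t ^ α - lam * Real.exp (-lam * t) * ∫ u in (0:ℝ)..t, Real.exp (lam * u) * u ^ α) :
    Tendsto (fun t => ψ t / t ^ α) (nhdsWithin 0 (Set.Ioi 0)) (nhds 1) ∧
    Tendsto (fun t => ψ t / t ^ (α - 1)) atTop (nhds (α / lam)) :=
  stmt_13_general lam H hlam hH α hα ψ hψ
end

section
/- Let (E, d) be a normed space (or more generally a linear metric space with invariant metric), and let F : ℝ → E be a Borel-measurable map with separable range such that d(F(t+u), F(v+u)) = d(F(t), F(v)) for all t, u, v ∈ ℝ. Then F is continuous. -/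
/-!
Since the increments are stationary, `dist (F (t + h)) (F t) = dist (F h) (F 0)`, so it suffices
to prove continuity at `0`. Given `ε > 0`, countably many balls of radius `ε / 2` around a dense
subset of the range cover it, so one of their preimages `A` has positive measure. By Steinhaus,
`A - A` is a neighbourhood of `0`, and for `h = a - b` with `a, b ∈ A` stationarity gives
`dist (F h) (F 0) = dist (F a) (F b) < ε`.
-/

open MeasureTheory Set Filter Topology Metric

theorem exists_measure_preimage_ball_pos {α E : Type*} [MeasurableSpace α] [PseudoMetricSpace E]
    {μ : Measure α} (hμ : μ ≠ 0) {F : α → E} (hF : TopologicalSpace.IsSeparable (range F))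
    {r : ℝ} (hr : 0 < r) : ∃ x, 0 < μ (F ⁻¹' ball x r) := by
  obtain ⟨c, hc, hcF⟩ := hF
  have hcover : univ ⊆ ⋃ x ∈ c, F ⁻¹' ball x r := fun t _ ↦ by
    obtain ⟨x, hx, htx⟩ := mem_closure_iff.1 (hcF ⟨t, rfl⟩) r hr
    exact mem_biUnion hx (mem_ball.2 htx)
  by_contra! hnull
  have hzero : μ univ = 0 :=
    measure_mono_null hcover <| (measure_biUnion_null_iff hc).2 fun x _ ↦ nonpos_iff_eq_zero.1 (hnull x)
  exact hμ (Measure.measure_univ_eq_zero.1 hzero)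

def HasStationaryIncrements {G E : Type*} [Add G] [Dist E] (F : G → E) : Prop :=
  ∀ t u v : G, dist (F (t + u)) (F (v + u)) = dist (F t) (F v)

namespace HasStationaryIncrements

variable {G E : Type*} [AddGroup G] [PseudoMetricSpace E] {F : G → E}

theorem dist_eq_dist_sub_zero (hF : HasStationaryIncrements F) (s t : G) :
    dist (F s) (F t) = dist (F (s - t)) (F 0) := by
  simpa using hF (s - t) t 0

variable [TopologicalSpace G] [IsTopologicalAddGroup G]

theorem continuous_of_continuousAt_zero (hF : HasStationaryIncrements F)
    (hF₀ : ContinuousAt F 0) : Continuous F := by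
  refine continuous_iff_continuousAt.2 fun t ↦ ?_
  have hsub : Tendsto (fun s ↦ s - t) (𝓝 t) (𝓝 0) := tendsto_sub_nhds_zero_iff.2 tendsto_id
  rw [ContinuousAt, tendsto_iff_dist_tendsto_zero] at hF₀ ⊢
  simp only [hF.dist_eq_dist_sub_zero _ t]
  exact hF₀.comp hsub

theorem continuousAt_zero [MeasurableSpace G] [BorelSpace G] [LocallyCompactSpace G]
    (μ : Measure G) [μ.IsAddHaarMeasure] [μ.InnerRegular] [MeasurableSpace E]
    [OpensMeasurableSpace E] (hF : HasStationaryIncrements F) (hmeas : Measurable F)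
    (hsep : TopologicalSpace.IsSeparable (range F)) : ContinuousAt F 0 := by
  refine Metric.tendsto_nhds.2 fun ε hε ↦ ?_
  obtain ⟨x, hpos⟩ := exists_measure_preimage_ball_pos (NeZero.ne μ) hsep (half_pos hε)
  have hsteinhaus := Measure.sub_mem_nhds_zero_of_addHaar_pos μ _ (hmeas measurableSet_ball) hpos
  filter_upwards [hsteinhaus] with _ hh
  obtain ⟨a, ha, b, hb, rfl⟩ := hh
  calc dist (F (a - b)) (F 0) = dist (F a) (F b) := (hF.dist_eq_dist_sub_zero a b).symm
    _ ≤ dist (F a) x + dist (F b) x := dist_triangle_right _ _ _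
    _ < ε / 2 + ε / 2 := add_lt_add ha hb
    _ = ε := add_halves ε

end HasStationaryIncrements

theorem stmt_15 {E : Type*} [NormedAddCommGroup E] [MeasurableSpace E] [BorelSpace E] (F : ℝ → E)
    (hmeas : Measurable F)
    (hsep : TopologicalSpace.IsSeparable (Set.range F))
    (hstat : ∀ t u v : ℝ, dist (F (t + u)) (F (v + u)) = dist (F t) (F v)) :
    Continuous F := by
  have hF : HasStationaryIncrements F := hstat
  exact hF.continuous_of_continuousAt_zero (hF.continuousAt_zero volume hmeas hsep)
end

section
/- Let (V, ‖·‖) be a normed space and F : ℝ → V a continuous map satisfying ‖F(t+u) - F(v+u)‖ = ‖F(t) - F(v)‖ for all t, u, v ∈ ℝ. Then there exist α, β > 0 with ‖F(t)‖ ≤ α + β|t| for all t ∈ ℝ; specifically one may take β = ‖F(1) - F(0)‖ and α = sup_{s∈[0,1]} ‖F(s) - F(0)‖ + ‖F(0)‖. -/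
/-!
Shifting by `u` preserves distances between values of `F`, so every unit step moves `F` by
exactly `‖F 1 - F 0‖`. Writing `t ≥ 0` as `(t - ⌊t⌋) + ⌊t⌋` and telescoping over the `⌊t⌋`
unit steps bounds `‖F t - F 0‖` by the (finite, by continuity) oscillation of `F` on `[0, 1]`
plus `⌊t⌋ ‖F 1 - F 0‖`; negative `t` reduce to positive ones by the shift `u = -t`.
-/

open Set

section StationaryIncrements

variable {X : Type*} [PseudoMetricSpace X] {F : ℝ → X}

theorem dist_add_natCast_le (hF : ∀ t u v : ℝ, dist (F (t + u)) (F (v + u)) = dist (F t) (F v))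
    (s : ℝ) (n : ℕ) :
    dist (F (s + n)) (F 0) ≤ dist (F s) (F 0) + n * dist (F 1) (F 0) := by
  induction n with
  | zero => simp
  | succ n ih =>
    have unit_step : dist (F (s + (n + 1 : ℕ))) (F (s + n)) = dist (F 1) (F 0) := by
      rw [← hF 1 (s + n) 0]
      congr 2 <;> push_cast <;> ring
    calc dist (F (s + (n + 1 : ℕ))) (F 0)
        ≤ dist (F (s + (n + 1 : ℕ))) (F (s + n)) + dist (F (s + n)) (F 0) := dist_triangle _ _ _
      _ ≤ dist (F s) (F 0) + (n + 1 : ℕ) * dist (F 1) (F 0) := by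
        rw [unit_step]; push_cast; linarith

theorem dist_neg_eq (hF : ∀ t u v : ℝ, dist (F (t + u)) (F (v + u)) = dist (F t) (F v))
    (t : ℝ) : dist (F (-t)) (F 0) = dist (F t) (F 0) := by
  simpa [dist_comm] using hF t (-t) 0

theorem dist_le_add_mul_abs_of_forall_mem_Icc
    (hF : ∀ t u v : ℝ, dist (F (t + u)) (F (v + u)) = dist (F t) (F v))
    {C : ℝ} (hC : ∀ s ∈ Icc (0 : ℝ) 1, dist (F s) (F 0) ≤ C) (t : ℝ) :
    dist (F t) (F 0) ≤ C + dist (F 1) (F 0) * |t| := by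
  wlog ht : 0 ≤ t generalizing t
  · simpa [dist_neg_eq hF] using this (-t) (by linarith)
  set n := ⌊t⌋₊
  have hn : (n : ℝ) ≤ t := Nat.floor_le ht
  have hfrac : t - n ∈ Icc (0 : ℝ) 1 := ⟨by linarith, by linarith [Nat.lt_floor_add_one t]⟩
  calc dist (F t) (F 0) = dist (F (t - n + n)) (F 0) := by rw [sub_add_cancel]
    _ ≤ C + n * dist (F 1) (F 0) := (dist_add_natCast_le hF _ n).trans (by linarith [hC _ hfrac])
    _ ≤ C + dist (F 1) (F 0) * |t| := by
      rw [abs_of_nonneg ht, mul_comm]; gcongr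

theorem exists_dist_le_add_mul_abs
    (hF : ∀ t u v : ℝ, dist (F (t + u)) (F (v + u)) = dist (F t) (F v)) (hcont : Continuous F) :
    ∃ C, ∀ t, dist (F t) (F 0) ≤ C + dist (F 1) (F 0) * |t| := by
  obtain ⟨C, hC⟩ :=
    isCompact_Icc.bddAbove_image (hcont.dist continuous_const).continuousOn (K := Icc (0 : ℝ) 1)
  exact ⟨C, dist_le_add_mul_abs_of_forall_mem_Icc hF fun s hs => hC (mem_image_of_mem _ hs)⟩

end StationaryIncrements

theorem stmt_16 {V : Type*} [NormedAddCommGroup V] (F : ℝ → V)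
    (hcont : Continuous F)
    (hstat : ∀ t u v : ℝ, ‖F (t + u) - F (v + u)‖ = ‖F t - F v‖) :
    ∃ α β : ℝ, 0 < α ∧ 0 < β ∧ ∀ t : ℝ, ‖F t‖ ≤ α + β * |t| := by
  obtain ⟨C, hC⟩ := exists_dist_le_add_mul_abs (by simpa only [dist_eq_norm] using hstat) hcont
  refine ⟨|C| + ‖F 0‖ + 1, ‖F 1 - F 0‖ + 1, by positivity, by positivity, fun t => ?_⟩
  have hFt : ‖F t - F 0‖ ≤ C + ‖F 1 - F 0‖ * |t| := by simpa only [dist_eq_norm] using hC t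
  calc ‖F t‖ ≤ ‖F 0‖ + ‖F t - F 0‖ := norm_le_norm_add_norm_sub' _ _
    _ ≤ |C| + ‖F 0‖ + 1 + (‖F 1 - F 0‖ + 1) * |t| := by
      linarith [le_abs_self C, abs_nonneg t]
end

section
/- Fix λ > 0, H ∈ (0,1) with H ≠ 1/2, and set V(t) = t^{2H}. Then with R(t) = (e^{-λ t}/(4λ)) ∫_1^t e^{λ u} V''(u) du + (e^{λ t}/(4λ)) ∫_t^∞ e^{-λ u} V''(u) du, one has R(t) / t^{2H-2} → H(2H-1)/λ² as t → ∞. -/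
/-! After the substitutions `u = t + s` and `u = t - s`, both terms of `R t / t ^ (2H - 2)` become
`(2H(2H - 1) / (4λ)) ∫₀^∞ e^{-λs} φ_t(s) ds`, with `φ_t(s) = ((t ± s) / t) ^ (2H - 2)` (cut off at
`s = t - 1` in the first term). As `t → ∞`, `φ_t → 1` pointwise, and `|φ_t(s)| ≤ (1 + s) ^ |2H - 2|`
because `(1 + s)⁻¹ ≤ (t ± s) / t ≤ 1 + s` for `t ≥ 1`; dominated convergence then gives `1 / λ`
for each term. -/

open MeasureTheory Real Set Filter Topology Asymptotics

lemma rpow_le_rpow_abs_of_inv_le_of_le {a x : ℝ} (α : ℝ) (ha : 0 < a) (hx : a⁻¹ ≤ x)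
    (hx' : x ≤ a) : x ^ α ≤ a ^ |α| := by
  have hinv : 0 < a⁻¹ := inv_pos.2 ha
  rcases le_or_gt 0 α with hα | hα
  · rw [abs_of_nonneg hα]
    exact rpow_le_rpow (hinv.le.trans hx) hx' hα
  · rw [abs_of_neg hα, rpow_neg ha.le, ← inv_rpow ha.le]
    exact rpow_le_rpow_of_nonpos hinv hx hα.le

lemma integrableOn_exp_neg_mul_mul_one_add_rpow {lam : ℝ} (hlam : 0 < lam) (β : ℝ) :
    IntegrableOn (fun s => exp (-lam * s) * (1 + s) ^ β) (Ioi 0) := by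
  refine integrable_of_isBigO_exp_neg (half_pos hlam) ?_ ?_
  · exact (continuous_exp.comp (continuous_const.mul continuous_id)).continuousOn.mul
      ((continuousOn_const.add continuousOn_id).rpow_const fun s hs =>
        Or.inl (show (1 : ℝ) + s ≠ 0 by linarith [mem_Ici.1 hs]))
  · have hpow : (fun s : ℝ => (1 + s) ^ β) =O[atTop] fun s => exp (lam / 2 * s) := by
      have := ((isLittleO_rpow_exp_pos_mul_atTop β (half_pos hlam)).comp_tendsto
        (tendsto_atTop_add_const_left atTop 1 tendsto_id)).isBigO
      refine this.trans (isBigO_of_le' (c := exp (lam / 2)) _ fun s => ?_)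
      simp only [Function.comp, id, norm_of_nonneg (exp_pos _).le, ← exp_add]
      exact le_of_eq (by ring_nf)
    refine ((isBigO_refl (fun s => exp (-lam * s)) atTop).mul hpow).congr_right fun s => ?_
    rw [← exp_add]
    ring_nf

theorem tendsto_setIntegral_exp_neg_mul_of_tendsto_one {ι : Type*} {l : Filter ι}
    [l.IsCountablyGenerated] {lam β : ℝ} (hlam : 0 < lam) {F : ι → ℝ → ℝ}
    (hmeas : ∀ᶠ i in l, AEStronglyMeasurable (F i) (volume.restrict (Ioi 0)))
    (hbound : ∀ᶠ i in l, ∀ s > 0, |F i s| ≤ (1 + s) ^ β)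
    (hlim : ∀ s > 0, Tendsto (fun i => F i s) l (𝓝 1)) :
    Tendsto (fun i => ∫ s in Ioi 0, exp (-lam * s) * F i s) l (𝓝 (1 / lam)) := by
  have hexp : ∫ s in Ioi 0, exp (-lam * s) = 1 / lam := by
    rw [integral_exp_mul_Ioi (neg_lt_zero.2 hlam)]; simp
  rw [← hexp]
  refine tendsto_integral_filter_of_dominated_convergence _ ?_ ?_
    (integrableOn_exp_neg_mul_mul_one_add_rpow hlam β) ?_
  · filter_upwards [hmeas] with i hi
    exact (continuous_exp.comp (continuous_const.mul continuous_id)).aestronglyMeasurable.mul hi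
  · filter_upwards [hbound] with i hi
    filter_upwards [ae_restrict_mem measurableSet_Ioi] with s hs
    rw [norm_mul, norm_of_nonneg (exp_pos _).le, norm_eq_abs]
    exact mul_le_mul_of_nonneg_left (hi s hs) (exp_pos _).le
  · filter_upwards [ae_restrict_mem measurableSet_Ioi] with s hs
    simpa using (hlim s hs).const_mul (exp (-lam * s))

lemma exp_mul_setIntegral_Ioi_div_rpow (lam α : ℝ) {t : ℝ} (ht : 0 < t) :
    exp (lam * t) * (∫ u in Ioi t, exp (-lam * u) * u ^ α) / t ^ α
      = ∫ s in Ioi 0, exp (-lam * s) * ((t + s) / t) ^ α := by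
  have hshift := (measurePreserving_add_right volume t).setIntegral_preimage_emb
    (measurableEmbedding_addRight t) (fun u => exp (-lam * u) * u ^ α) (Ioi t)
  rw [preimage_add_const_Ioi, sub_self] at hshift
  rw [← hshift, mul_div_assoc, ← integral_div, ← integral_const_mul]
  refine setIntegral_congr_fun measurableSet_Ioi fun s hs => ?_
  rw [div_rpow (by linarith [mem_Ioi.1 hs]) ht.le, add_comm s t, mul_add, exp_add]
  simp only [neg_mul, exp_neg]
  field_simp

lemma exp_neg_mul_intervalIntegral_div_rpow (lam α : ℝ) {t : ℝ} (ht : 1 ≤ t) :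
    exp (-lam * t) * (∫ u in (1 : ℝ)..t, exp (lam * u) * u ^ α) / t ^ α
      = ∫ s in Ioi 0, exp (-lam * s) * (Iic (t - 1)).indicator (fun s => ((t - s) / t) ^ α) s := by
  have hsub := intervalIntegral.integral_comp_sub_left (fun u => exp (lam * u) * u ^ α)
    (a := 0) (b := t - 1) t
  rw [sub_sub_cancel, sub_zero] at hsub
  have hind : (fun s => exp (-lam * s) * (Iic (t - 1)).indicator (fun s => ((t - s) / t) ^ α) s)
      = (Iic (t - 1)).indicator fun s => exp (-lam * s) * ((t - s) / t) ^ α :=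
    funext fun s => (indicator_mul_right _ (fun s => exp (-lam * s)) _).symm
  rw [hind, setIntegral_indicator measurableSet_Iic, Ioi_inter_Iic, ← hsub,
    intervalIntegral.integral_of_le (by linarith), mul_div_assoc, ← integral_div,
    ← integral_const_mul]
  refine setIntegral_congr_fun measurableSet_Ioc fun s hs => ?_
  rw [div_rpow (by linarith [hs.2]) (by linarith), mul_sub, exp_sub]
  simp only [neg_mul, exp_neg]
  field_simp

lemma tendsto_add_div_self_rpow (s α : ℝ) :
    Tendsto (fun t => ((t + s) / t) ^ α) atTop (𝓝 1) := by
  have h : Tendsto (fun t : ℝ => 1 + s * t⁻¹) atTop (𝓝 (1 + s * 0)) :=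
    tendsto_const_nhds.add (tendsto_inv_atTop_zero.const_mul s)
  rw [mul_zero, add_zero] at h
  have h' : Tendsto (fun t : ℝ => (t + s) / t) atTop (𝓝 1) := by
    refine h.congr' ?_
    filter_upwards [eventually_gt_atTop 0] with t ht
    field_simp
  simpa using h'.rpow_const (Or.inl one_ne_zero)

theorem tendsto_exp_mul_setIntegral_Ioi_div_rpow {lam : ℝ} (hlam : 0 < lam) (α : ℝ) :
    Tendsto (fun t => exp (lam * t) * (∫ u in Ioi t, exp (-lam * u) * u ^ α) / t ^ α)
      atTop (𝓝 (1 / lam)) := by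
  refine (tendsto_setIntegral_exp_neg_mul_of_tendsto_one hlam (β := |α|) ?_ ?_
    fun s _ => tendsto_add_div_self_rpow s α).congr' ?_
  · exact Eventually.of_forall fun t => (by fun_prop : Measurable _).aestronglyMeasurable
  · filter_upwards [eventually_ge_atTop 1] with t ht s hs
    have hts : 1 ≤ (t + s) / t := by rw [le_div_iff₀ (by linarith)]; linarith
    rw [abs_of_nonneg (rpow_nonneg (by linarith) α)]
    refine rpow_le_rpow_abs_of_inv_le_of_le α (by linarith)
      ((inv_le_one_of_one_le₀ (by linarith)).trans hts) ?_
    rw [div_le_iff₀ (by linarith)]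
    nlinarith
  · filter_upwards [eventually_gt_atTop 0] with t ht
    exact (exp_mul_setIntegral_Ioi_div_rpow lam α ht).symm

theorem tendsto_exp_neg_mul_intervalIntegral_div_rpow {lam : ℝ} (hlam : 0 < lam) (α : ℝ) :
    Tendsto (fun t => exp (-lam * t) * (∫ u in (1 : ℝ)..t, exp (lam * u) * u ^ α) / t ^ α)
      atTop (𝓝 (1 / lam)) := by
  refine (tendsto_setIntegral_exp_neg_mul_of_tendsto_one hlam (β := |α|)
    (F := fun t => (Iic (t - 1)).indicator fun s => ((t - s) / t) ^ α) ?_ ?_ ?_).congr' ?_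
  · exact Eventually.of_forall fun t =>
      ((by fun_prop : Measurable _).indicator measurableSet_Iic).aestronglyMeasurable
  · filter_upwards [eventually_ge_atTop 1] with t ht s hs
    by_cases hst : s ≤ t - 1
    · rw [indicator_of_mem (mem_Iic.2 hst),
        abs_of_nonneg (rpow_nonneg (div_nonneg (by linarith) (by linarith)) α)]
      refine rpow_le_rpow_abs_of_inv_le_of_le α (by linarith) ?_ ?_
      · rw [inv_le_iff_one_le_mul₀ (by linarith), div_mul_eq_mul_div, le_div_iff₀ (by linarith)]
        nlinarith
      · rw [div_le_iff₀ (by linarith)]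
        nlinarith
    · rw [indicator_of_notMem (mt mem_Iic.1 hst), abs_zero]
      positivity
  · intro s _
    refine (tendsto_add_div_self_rpow (-s) α).congr' ?_
    filter_upwards [eventually_ge_atTop (s + 1)] with t ht
    rw [indicator_of_mem (mem_Iic.2 (by linarith)), ← sub_eq_add_neg]
  · filter_upwards [eventually_ge_atTop 1] with t ht
    exact (exp_neg_mul_intervalIntegral_div_rpow lam α ht).symm

theorem stmt_18_general (lam H : ℝ) (hlam : 0 < lam)
    (R : ℝ → ℝ)
    (hR : ∀ t : ℝ,
      R t = (Real.exp (-lam * t) / (4 * lam)) *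
              (∫ u in (1:ℝ)..t, Real.exp (lam * u) * (2 * H * (2 * H - 1) * u ^ (2 * H - 2)))
          + (Real.exp (lam * t) / (4 * lam)) *
              ∫ u in Set.Ioi t, Real.exp (-lam * u) * (2 * H * (2 * H - 1) * u ^ (2 * H - 2))) :
    Tendsto (fun t => R t / t ^ (2 * H - 2)) atTop (nhds (H * (2 * H - 1) / lam ^ 2)) := by
  set c := 2 * H * (2 * H - 1)
  set α := 2 * H - 2
  have hsplit : ∀ t, R t / t ^ α = c / (4 * lam) *
      (exp (-lam * t) * (∫ u in (1 : ℝ)..t, exp (lam * u) * u ^ α) / t ^ α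
        + exp (lam * t) * (∫ u in Ioi t, exp (-lam * u) * u ^ α) / t ^ α) := by
    intro t
    simp_rw [hR, mul_left_comm (exp _) c, intervalIntegral.integral_const_mul, integral_const_mul]
    ring
  have hlim := ((tendsto_exp_neg_mul_intervalIntegral_div_rpow hlam α).add
    (tendsto_exp_mul_setIntegral_Ioi_div_rpow hlam α)).const_mul (c / (4 * lam))
  simp_rw [hsplit]
  convert hlim using 2
  field_simp
  ring

theorem stmt_18 (lam H : ℝ) (hlam : 0 < lam) (hH : H ∈ Set.Ioo (0:ℝ) 1) (hH2 : H ≠ 1/2)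
    (R : ℝ → ℝ)
    (hR : ∀ t : ℝ,
      R t = (Real.exp (-lam * t) / (4 * lam)) *
              (∫ u in (1:ℝ)..t, Real.exp (lam * u) * (2 * H * (2 * H - 1) * u ^ (2 * H - 2)))
          + (Real.exp (lam * t) / (4 * lam)) *
              ∫ u in Set.Ioi t, Real.exp (-lam * u) * (2 * H * (2 * H - 1) * u ^ (2 * H - 2))) :
    Tendsto (fun t => R t / t ^ (2 * H - 2)) atTop (nhds (H * (2 * H - 1) / lam ^ 2)) :=
  stmt_18_general lam H hlam R hR
end
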